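/- With ϱ^{λ,μ} as above, define κ_{η,φ} : Z^n × Z^n → K^× by κ_{η,φ}(λ,μ) = ϱ^{λ,μ}(ω'_η ω_φ). If u = Σ_{(η,φ)} k_{η,φ} ω'_η ω_φ (finite sum in the group algebra of Z^n × Z^n over K) satisfies ϱ^{λ,μ}(u) = 0 for all λ, μ ∈ Z^n, then u = 0. -/

import Mathlib

/-!
Each `ω'_η ω_φ` gives a character `(λ, μ) ↦ ϱ^{λ,μ}(ω'_η ω_φ)` of `ℤⁿ × ℤⁿ`, and the hypothesis on
`u` says that a linear combination of these characters vanishes. By Dedekind's theorem it suffices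
that distinct `(η, φ)` give distinct characters. Taking `λ = 0` leaves `q^{(η+φ)ᵀ DA μ}`, so since
`q` has infinite order and `DA` is nondegenerate the character determines `η + φ`; then the factor
with the `q_{ij}` is known, and `μ = 0` determines `φ - η` in the same way.
-/

/-- `ϱ^{λ,μ}(ω'_η ω_φ) = q^{(φ-η)ᵀDAλ} (∏_{i,j} q_{ij}^{-λ_i(φ+η)_j}) q^{(η+φ,μ)}`. -/
noncomputable def rhoLM {K : Type*} [Field K] (n : ℕ) (q : Kˣ) (qm : Fin n → Fin n → Kˣ)
    (d : Fin n → ℤ) (A : Matrix (Fin n) (Fin n) ℤ) (lam mu η φ : Fin n → ℤ) : Kˣ :=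
  q ^ (∑ i, ∑ j, (φ i - η i) * (d i * A i j * lam j)) *
    (∏ i, ∏ j, qm i j ^ (-(lam i) * (φ j + η j))) *
    q ^ (∑ i, ∑ j, (η i + φ i) * (d i * A i j * mu j))

theorem eq_zero_of_forall_sum_mul_monoidHom_eq_zero {ι G L : Type*} [MulOneClass G] [CommRing L]
    [IsDomain L] {χ : ι → G →* L} (hχ : Function.Injective χ) (c : ι →₀ L)
    (h : ∀ x, (c.sum fun i a => a * χ i x) = 0) : c = 0 :=
  linearIndependent_iff.mp ((linearIndependent_monoidHom G L).comp χ hχ) c <| by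
    ext x
    simp only [Finsupp.linearCombination_apply, Finsupp.sum_apply', Function.comp_apply,
      Pi.smul_apply, smul_eq_mul, Pi.zero_apply]
    exact h x

open Matrix in
theorem eq_of_forall_zpow_dotProduct_mulVec_eq {G m : Type*} [Group G] [Fintype m]
    [DecidableEq m] {g : G} (hg : Function.Injective (g ^ · : ℤ → G)) {M : Matrix m m ℤ}
    (hM : M.det ≠ 0) {v v' : m → ℤ} (h : ∀ w, g ^ (v ⬝ᵥ M *ᵥ w) = g ^ (v' ⬝ᵥ M *ᵥ w)) :
    v = v' := by
  have hsep := separatingLeft_def.mp (nondegenerate_of_det_ne_zero hM).separatingLeft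
  refine sub_eq_zero.mp <| hsep _ fun w => ?_
  rw [sub_dotProduct, sub_eq_zero]
  exact hg (h w)

section rhoLM

open Matrix

variable {K : Type*} [Field K] {n : ℕ} (q : Kˣ) (qm : Fin n → Fin n → Kˣ) (d : Fin n → ℤ)
  (A : Matrix (Fin n) (Fin n) ℤ)

theorem rhoLM_eq (lam mu η φ : Fin n → ℤ) :
    rhoLM n q qm d A lam mu η φ =
      q ^ ((φ - η) ⬝ᵥ of (fun i j => d i * A i j) *ᵥ lam) *
        (∏ i, ∏ j, qm i j ^ (-(lam i) * (φ + η) j)) *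
        q ^ ((φ + η) ⬝ᵥ of (fun i j => d i * A i j) *ᵥ mu) := by
  simp [rhoLM, dotProduct, mulVec, Finset.mul_sum, mul_assoc, add_comm]

theorem rhoLM_add (l₁ l₂ m₁ m₂ η φ : Fin n → ℤ) :
    rhoLM n q qm d A (l₁ + l₂) (m₁ + m₂) η φ =
      rhoLM n q qm d A l₁ m₁ η φ * rhoLM n q qm d A l₂ m₂ η φ := by
  simp only [rhoLM_eq, mulVec_add, dotProduct_add, _root_.zpow_add, Pi.add_apply, neg_add, add_mul,
    Finset.prod_mul_distrib]
  ac_rfl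

theorem rhoLM_zero_left (mu η φ : Fin n → ℤ) :
    rhoLM n q qm d A 0 mu η φ = q ^ ((φ + η) ⬝ᵥ of (fun i j => d i * A i j) *ᵥ mu) := by
  simp [rhoLM_eq]

theorem rhoLM_zero_right (lam η φ : Fin n → ℤ) :
    rhoLM n q qm d A lam 0 η φ =
      q ^ ((φ - η) ⬝ᵥ of (fun i j => d i * A i j) *ᵥ lam) *
        ∏ i, ∏ j, qm i j ^ (-(lam i) * (φ + η) j) := by
  simp [rhoLM_eq]

variable {q} in
theorem rhoLM_injective (hq : Function.Injective (q ^ · : ℤ → Kˣ))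
    (hDA : (of fun i j => d i * A i j).det ≠ 0) {η φ η' φ' : Fin n → ℤ}
    (h : ∀ lam mu, rhoLM n q qm d A lam mu η φ = rhoLM n q qm d A lam mu η' φ') :
    η = η' ∧ φ = φ' := by
  have hsum : φ + η = φ' + η' := eq_of_forall_zpow_dotProduct_mulVec_eq hq hDA fun mu => by
    simpa only [rhoLM_zero_left] using h 0 mu
  have hdiff : φ - η = φ' - η' := eq_of_forall_zpow_dotProduct_mulVec_eq hq hDA fun lam => by
    have := h lam 0
    rwa [rhoLM_zero_right, rhoLM_zero_right, hsum, mul_left_inj] at this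
  have hcoord : ∀ i, φ i + η i = φ' i + η' i ∧ φ i - η i = φ' i - η' i := fun i =>
    ⟨congrFun hsum i, congrFun hdiff i⟩
  exact ⟨funext fun i => by have := hcoord i; omega, funext fun i => by have := hcoord i; omega⟩

noncomputable def rhoLMHom (η φ : Fin n → ℤ) : Multiplicative ((Fin n → ℤ) × (Fin n → ℤ)) →* Kˣ :=
  MonoidHom.mk' (fun x => rhoLM n q qm d A x.toAdd.1 x.toAdd.2 η φ)
    fun x y => rhoLM_add q qm d A x.toAdd.1 y.toAdd.1 x.toAdd.2 y.toAdd.2 η φ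

end rhoLM

theorem stmt7_general {K : Type*} [Field K] (n : ℕ) (q : Kˣ) (qm : Fin n → Fin n → Kˣ)
    (hind : ∀ (a : ℤ) (b : Fin n → Fin n → ℤ),
      q ^ a * ∏ i, ∏ j, (if i < j then qm i j ^ b i j else 1) = 1 →
      a = 0 ∧ ∀ i j, i < j → b i j = 0)
    (d : Fin n → ℤ)
    (A : Matrix (Fin n) (Fin n) ℤ)
    (hDA : (Matrix.of fun i j => d i * A i j).det ≠ 0)
    (u : AddMonoidAlgebra K ((Fin n → ℤ) × (Fin n → ℤ)))
    (h : ∀ lam mu : Fin n → ℤ,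
      (u.coeff.sum fun p c => c * ((rhoLM n q qm d A lam mu p.1 p.2 : Kˣ) : K)) = 0) :
    u = 0 := by
  have hq : Function.Injective (q ^ · : ℤ → Kˣ) := fun a b hab => by
    have := (hind (a - b) 0 (by simpa [zpow_sub, mul_inv_eq_one] using hab)).1
    omega
  let χ (p : (Fin n → ℤ) × (Fin n → ℤ)) := (Units.coeHom K).comp (rhoLMHom q qm d A p.1 p.2)
  have hχ : Function.Injective χ := fun p p' hpp' => by
    obtain ⟨h₁, h₂⟩ := rhoLM_injective qm d A hq hDA fun lam mu =>
      Units.ext <| DFunLike.congr_fun hpp' (Multiplicative.ofAdd (lam, mu))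
    exact Prod.ext h₁ h₂
  exact AddMonoidAlgebra.coeff_eq_zero.mp <|
    eq_zero_of_forall_sum_mul_monoidHom_eq_zero hχ u.coeff fun x => h x.toAdd.1 x.toAdd.2

/-- if a finite sum `u = Σ k_{η,φ} ω'_η ω_φ` in the group algebra of `ℤⁿ × ℤⁿ`
satisfies `ϱ^{λ,μ}(u) = 0` for all `λ, μ`, then `u = 0`. -/
theorem stmt7 {K : Type*} [Field K] (n : ℕ) (q : Kˣ) (qm : Fin n → Fin n → Kˣ)
    (hqdiag : ∀ i, qm i i = 1) (hqskew : ∀ i j, qm i j * qm j i = 1)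
    (hind : ∀ (a : ℤ) (b : Fin n → Fin n → ℤ),
      q ^ a * ∏ i, ∏ j, (if i < j then qm i j ^ b i j else 1) = 1 →
      a = 0 ∧ ∀ i j, i < j → b i j = 0)
    (d : Fin n → ℤ) (hd : ∀ i, 0 < d i)
    (A : Matrix (Fin n) (Fin n) ℤ) (hsym : ∀ i j, d i * A i j = d j * A j i)
    (hDA : (Matrix.of fun i j => d i * A i j).det ≠ 0)
    (u : AddMonoidAlgebra K ((Fin n → ℤ) × (Fin n → ℤ)))
    (h : ∀ lam mu : Fin n → ℤ,
      (u.coeff.sum fun p c => c * ((rhoLM n q qm d A lam mu p.1 p.2 : Kˣ) : K)) = 0) :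
    u = 0 :=
  stmt7_general n q qm hind d A hDA u h
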